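/- arXiv:2211.02594 — 2 statements merged into one kernel-verified Lean document; each statement's English description precedes it below -/
import Mathlib

section
/- Let X be a Banach space, n ∈ ℕ, and let T: ℓ∞^n → X be any bounded linear operator, where ℓ∞^n is the n-dimensional sequence space with the sup-norm and standard unit vectors e_1, …, e_n. Then T is nuclear and ν(T) = ∑_{i=1}^n ‖T e_i‖_X. -/
/-!
The coordinate functionals of `ℓ∞ⁿ` have norm at most `1`, so `T x = ∑ᵢ xᵢ • T eᵢ` is a nuclear
representation of cost at most `∑ ‖T eᵢ‖`. Conversely, for any representation
`T = ∑ₖ aₖ ⊗ yₖ` we have `‖T eᵢ‖ ≤ ∑ₖ ‖aₖ eᵢ‖ ‖yₖ‖`, and summing over `i` first uses that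
`∑ᵢ ‖f eᵢ‖ ≤ ‖f‖` for every functional `f` on `ℓ∞ⁿ`: test `f` on the vector of phases
`conj (f eᵢ) / ‖f eᵢ‖` (read as `0` where `f eᵢ = 0`), whose sup-norm is at most `1`.
-/

open scoped ENNReal

def IsNuclearRep {X Y : Type*} [NormedAddCommGroup X] [NormedSpace ℂ X]
    [NormedAddCommGroup Y] [NormedSpace ℂ Y] (T : X →L[ℂ] Y)
    (a : ℕ → (X →L[ℂ] ℂ)) (y : ℕ → Y) : Prop :=
  Summable (fun k => ‖a k‖ * ‖y k‖) ∧ ∀ x : X, HasSum (fun k => a k x • y k) (T x)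

def IsNuclear {X Y : Type*} [NormedAddCommGroup X] [NormedSpace ℂ X]
    [NormedAddCommGroup Y] [NormedSpace ℂ Y] (T : X →L[ℂ] Y) : Prop :=
  ∃ a y, IsNuclearRep T a y

noncomputable def nuclearNorm {X Y : Type*} [NormedAddCommGroup X] [NormedSpace ℂ X]
    [NormedAddCommGroup Y] [NormedSpace ℂ Y] (T : X →L[ℂ] Y) : ℝ :=
  sInf {c : ℝ | ∃ a y, IsNuclearRep T a y ∧ c = ∑' k, ‖a k‖ * ‖y k‖}

open Function

lemma Function.extend_zero_apply₂ {α β M N P : Type*} [Zero M] [Zero N] [Zero P]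
    {g : α → β} (hg : Injective g) (a : α → M) (y : α → N) (F : M → N → P) (hF : F 0 0 = 0) :
    (fun k => F (extend g a 0 k) (extend g y 0 k)) = extend g (fun i => F (a i) (y i)) 0 := by
  funext k
  by_cases hk : ∃ i, g i = k
  · obtain ⟨i, rfl⟩ := hk
    simp only [hg.extend_apply]
  · simp only [extend_apply' _ _ _ hk, Pi.zero_apply, hF]

section FiniteRank

variable {X Y : Type*} [NormedAddCommGroup X] [NormedSpace ℂ X]
  [NormedAddCommGroup Y] [NormedSpace ℂ Y]

lemma exists_isNuclearRep_of_eq_sum {ι : Type*} [Fintype ι] {T : X →L[ℂ] Y}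
    (a : ι → X →L[ℂ] ℂ) (y : ι → Y) (hT : ∀ x, T x = ∑ i, a i x • y i) :
    ∃ a' y', IsNuclearRep T a' y' ∧ ∑' k, ‖a' k‖ * ‖y' k‖ = ∑ i, ‖a i‖ * ‖y i‖ := by
  obtain ⟨g, hg⟩ := Countable.exists_injective_nat ι
  have hnorm := extend_zero_apply₂ hg a y (fun f v => ‖f‖ * ‖v‖) (by simp)
  refine ⟨extend g a 0, extend g y 0, ⟨?_, fun x => ?_⟩, ?_⟩
  · rw [hnorm, summable_extend_zero hg]
    exact (hasSum_fintype _).summable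
  · rw [extend_zero_apply₂ hg a y (fun f v => f x • v) (by simp), hasSum_extend_zero hg, hT]
    exact hasSum_fintype _
  · rw [hnorm, tsum_extend_zero hg, tsum_fintype]

end FiniteRank

section NuclearNorm

variable {X Y : Type*} [NormedAddCommGroup X] [NormedSpace ℂ X]
  [NormedAddCommGroup Y] [NormedSpace ℂ Y] {T : X →L[ℂ] Y} {a : ℕ → X →L[ℂ] ℂ} {y : ℕ → Y}

lemma IsNuclearRep.summable_norm_apply_mul (h : IsNuclearRep T a y) (x : X) :
    Summable fun k => ‖a k x‖ * ‖y k‖ :=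
  (h.1.mul_right ‖x‖).of_nonneg_of_le (fun _ => by positivity) fun k => by
    rw [mul_right_comm]
    exact mul_le_mul_of_nonneg_right ((a k).le_opNorm x) (norm_nonneg _)

lemma IsNuclearRep.norm_apply_le_tsum (h : IsNuclearRep T a y) (x : X) :
    ‖T x‖ ≤ ∑' k, ‖a k x‖ * ‖y k‖ :=
  (h.2 x).norm_le_of_bounded (h.summable_norm_apply_mul x).hasSum fun _ => (norm_smul _ _).le

lemma IsNuclearRep.sum_norm_apply_le_tsum {ι : Type*} [Fintype ι] (h : IsNuclearRep T a y)
    (v : ι → X) (hv : ∀ f : X →L[ℂ] ℂ, ∑ i, ‖f (v i)‖ ≤ ‖f‖) :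
    ∑ i, ‖T (v i)‖ ≤ ∑' k, ‖a k‖ * ‖y k‖ := by
  have hbound : ∀ k, ∑ i, ‖a k (v i)‖ * ‖y k‖ ≤ ‖a k‖ * ‖y k‖ := fun k => by
    rw [← Finset.sum_mul]
    exact mul_le_mul_of_nonneg_right (hv (a k)) (norm_nonneg _)
  calc ∑ i, ‖T (v i)‖ ≤ ∑ i, ∑' k, ‖a k (v i)‖ * ‖y k‖ :=
        Finset.sum_le_sum fun i _ => h.norm_apply_le_tsum (v i)
    _ = ∑' k, ∑ i, ‖a k (v i)‖ * ‖y k‖ :=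
        (Summable.tsum_finsetSum fun i _ => h.summable_norm_apply_mul (v i)).symm
    _ ≤ ∑' k, ‖a k‖ * ‖y k‖ :=
        (summable_sum fun i _ => h.summable_norm_apply_mul (v i)).tsum_le_tsum hbound h.1

lemma nuclearNorm_eq_of_forall_le (c : ℝ)
    (hrep : ∃ a y, IsNuclearRep T a y ∧ ∑' k, ‖a k‖ * ‖y k‖ ≤ c)
    (hle : ∀ a y, IsNuclearRep T a y → c ≤ ∑' k, ‖a k‖ * ‖y k‖) :
    nuclearNorm T = c := by
  obtain ⟨a₀, y₀, hrep₀, hc⟩ := hrep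
  have hlb : c ∈ lowerBounds {c : ℝ | ∃ a y, IsNuclearRep T a y ∧ c = ∑' k, ‖a k‖ * ‖y k‖} := by
    rintro _ ⟨a, y, h, rfl⟩
    exact hle a y h
  have hmem : ∑' k, ‖a₀ k‖ * ‖y₀ k‖ ∈
      {c : ℝ | ∃ a y, IsNuclearRep T a y ∧ c = ∑' k, ‖a k‖ * ‖y k‖} := ⟨a₀, y₀, hrep₀, rfl⟩
  exact le_antisymm ((csInf_le ⟨c, hlb⟩ hmem).trans hc) (le_csInf ⟨_, hmem⟩ hlb)

end NuclearNorm

section SupNorm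

variable {𝕜 ι : Type*} [RCLike 𝕜] [Fintype ι]

lemma PiLp.norm_proj_le_one {p : ℝ≥0∞} [Fact (1 ≤ p)] (i : ι) :
    ‖(PiLp.proj p (𝕜 := 𝕜) (fun _ : ι => 𝕜) i)‖ ≤ 1 :=
  ContinuousLinearMap.opNorm_le_bound _ zero_le_one fun x => by
    simpa using PiLp.norm_apply_le x i

variable [DecidableEq ι]

lemma PiLp.sum_smul_single_one {p : ℝ≥0∞} (x : PiLp p fun _ : ι => 𝕜) :
    ∑ i, x i • PiLp.single p i (1 : 𝕜) = x := by
  simpa using (PiLp.basisFun p 𝕜 ι).sum_repr x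

lemma PiLp.sum_norm_apply_single_le_opNorm (f : PiLp ∞ (fun _ : ι => 𝕜) →L[𝕜] 𝕜) :
    ∑ i, ‖f (PiLp.single ∞ i 1)‖ ≤ ‖f‖ := by
  set e : ι → PiLp ∞ (fun _ : ι => 𝕜) := fun i => PiLp.single ∞ i 1
  set z : PiLp ∞ (fun _ : ι => 𝕜) := WithLp.toLp ∞ fun i => starRingEnd 𝕜 (f (e i)) / ‖f (e i)‖
  have hz : ‖z‖ ≤ 1 := by
    refine (PiLp.norm_toLp _).trans_le ((pi_norm_le_iff_of_nonneg zero_le_one).2 fun i => ?_)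
    rw [norm_div, RCLike.norm_conj, RCLike.norm_ofReal, abs_norm]
    exact div_self_le_one _
  have hfz : f z = ((∑ i, ‖f (e i)‖ : ℝ) : 𝕜) := by
    rw [← PiLp.sum_smul_single_one z, map_sum]
    push_cast
    refine Finset.sum_congr rfl fun i _ => ?_
    rw [map_smul, smul_eq_mul, PiLp.toLp_apply, div_mul_eq_mul_div, RCLike.conj_mul]
    rcases eq_or_ne (f (e i)) 0 with h | h
    · simp [h]
    · field_simp
  calc ∑ i, ‖f (e i)‖ = ‖f z‖ := by
        rw [hfz, RCLike.norm_ofReal, abs_of_nonneg (Finset.sum_nonneg fun i _ => norm_nonneg _)]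
    _ ≤ ‖f‖ * ‖z‖ := f.le_opNorm z
    _ ≤ ‖f‖ := mul_le_of_le_one_right (norm_nonneg f) hz

end SupNorm

theorem stmt1_general (X : Type*) [NormedAddCommGroup X] [NormedSpace ℂ X]
    (n : ℕ) (T : PiLp ∞ (fun _ : Fin n => ℂ) →L[ℂ] X) :
    IsNuclear T ∧
      nuclearNorm T
        = ∑ i : Fin n, ‖T ((WithLp.equiv ∞ (∀ _ : Fin n, ℂ)).symm (Pi.single i 1))‖ := by
  change IsNuclear T ∧ nuclearNorm T = ∑ i, ‖T (PiLp.single ∞ i 1)‖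
  have hrep : ∃ a y, IsNuclearRep T a y ∧ ∑' k, ‖a k‖ * ‖y k‖ ≤ ∑ i, ‖T (PiLp.single ∞ i 1)‖ := by
    obtain ⟨a, y, h, hsum⟩ := exists_isNuclearRep_of_eq_sum (T := T)
      (fun i => PiLp.proj ∞ (fun _ : Fin n => ℂ) i) (fun i => T (PiLp.single ∞ i 1))
      fun x => by simp_rw [PiLp.proj_apply, ← map_smul, ← map_sum, PiLp.sum_smul_single_one]
    refine ⟨a, y, h, hsum.trans_le (Finset.sum_le_sum fun i _ => ?_)⟩
    exact mul_le_of_le_one_left (norm_nonneg _) (PiLp.norm_proj_le_one i)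
  refine ⟨?_, nuclearNorm_eq_of_forall_le _ hrep fun a y h =>
    h.sum_norm_apply_le_tsum _ PiLp.sum_norm_apply_single_le_opNorm⟩
  obtain ⟨a, y, h, -⟩ := hrep
  exact ⟨a, y, h⟩

/-- Any bounded linear operator `T : ℓ∞ⁿ → X` into a Banach space `X`
is nuclear, with nuclear norm `ν(T) = ∑_{i=1}^n ‖T e_i‖`, where `e_i` are the
standard unit vectors of `ℓ∞ⁿ`. -/
theorem stmt1 (X : Type*) [NormedAddCommGroup X] [NormedSpace ℂ X] [CompleteSpace X]
    (n : ℕ) (T : PiLp ∞ (fun _ : Fin n => ℂ) →L[ℂ] X) :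
    IsNuclear T ∧
      nuclearNorm T
        = ∑ i : Fin n, ‖T ((WithLp.equiv ∞ (∀ _ : Fin n, ℂ)).symm (Pi.single i 1))‖ :=
  stmt1_general X n T
end

section
/- Let 1 ≤ p₂ < p₁ ≤ u₁ < ∞ and p₂ ≤ u₂ < ∞ with p₁/u₁ > p₂/u₂, and let j ∈ ℕ. Set ν₀ = min{ν ∈ ℕ : 2^{νd} ≥ 2^{jd p₂/u₂}} and let ℰ be the family of all sequences ε = (ε_k)_{k ∈ 𝒦_j} with ε_k ∈ {−1,0,1} such that for every dyadic cube Q_{−ν₀,m} ⊆ Q_{−j,0} there is exactly one k ∈ 𝒦_j with Q_{0,k} ⊆ Q_{−ν₀,m} and ε_k ≠ 0. Then there is a constant c > 0, independent of j, such that for every ε ∈ ℰ and every λ ∈ ℂ^{𝒦_j}: |∑_{k ∈ 𝒦_j} ε_k λ_k| ≤ c · 2^{−ν₀ d} · 2^{jd(1 − 1/u₁ + p₂/(u₂ p₁))} · ‖λ | m^{2^{jd}}_{u₁,p₁}‖. -/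
/-- The index set `𝒦_j = {k ∈ ℤ^d : Q_{0,k} ⊆ Q_{-j,0}}`, identified with
`(Fin d → Fin (2^j))` (the unit cubes inside the cube `[0, 2^j)^d`). -/
abbrev MorreyIdx (d j : ℕ) := Fin d → Fin (2 ^ j)

/-- `Q_{0,k} ⊆ Q_{-ν,m}` for a dyadic cube `Q_{-ν,m} ⊆ Q_{-j,0}` of side length `2^ν`,
where the cube is encoded by `m : Fin d → Fin (2^(j-ν))`: the condition is
`k i / 2^ν = m i` for all `i`. -/
def memSubcube {d j : ℕ} (ν : ℕ) (m : Fin d → ℕ) (k : MorreyIdx d j) : Prop :=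
  ∀ i, (k i : ℕ) / 2 ^ ν = m i

instance {d j : ℕ} (ν : ℕ) (m : Fin d → ℕ) (k : MorreyIdx d j) :
    Decidable (memSubcube ν m k) := by unfold memSubcube; infer_instance

/-- The norm of the finite-dimensional Morrey sequence space `m^{2^{jd}}_{u,p}`:
`‖λ‖ = max_{ν ≤ j, Q_{-ν,m} ⊆ Q_{-j,0}} |Q_{-ν,m}|^{1/u - 1/p}
   (∑_{k : Q_{0,k} ⊆ Q_{-ν,m}} |λ_k|^p)^{1/p}`, with `|Q_{-ν,m}| = 2^{νd}`. -/
noncomputable def morreyNorm (d j : ℕ) (u p : ℝ) (lam : MorreyIdx d j → ℂ) : ℝ :=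
  ⨆ ν : Fin (j + 1), ⨆ m : Fin d → Fin (2 ^ (j - (ν : ℕ))),
    (2 : ℝ) ^ ((((ν : ℕ) * d : ℕ) : ℝ) * (1 / u - 1 / p)) *
      (∑ k : MorreyIdx d j,
        if memSubcube (ν : ℕ) (fun i => (m i : ℕ)) k then ‖lam k‖ ^ p else 0) ^ (1 / p)

/-- The sup-norm on `ℂ^{𝒦_j}`, i.e. the norm of `ℓ∞^{2^{jd}}`. -/
noncomputable def supNorm (d j : ℕ) (lam : MorreyIdx d j → ℂ) : ℝ :=
  ⨆ k : MorreyIdx d j, ‖lam k‖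

/-- The operator norm of the identity map `(ℂ^{𝒦_j}, N₁) → (ℂ^{𝒦_j}, N₂)`. -/
noncomputable def idNorm (d j : ℕ) (N₁ N₂ : (MorreyIdx d j → ℂ) → ℝ) : ℝ :=
  sInf {C : ℝ | 0 ≤ C ∧ ∀ lam : MorreyIdx d j → ℂ, N₂ lam ≤ C * N₁ lam}

/-- The family `ℰ`: sequences `ε` with `ε_k ∈ {-1,0,1}` such that for every dyadic cube
`Q_{-ν₀,m} ⊆ Q_{-j,0}` (encoded by `m : Fin d → Fin (2^(j-ν₀))`) there is exactly one
`k ∈ 𝒦_j` with `Q_{0,k} ⊆ Q_{-ν₀,m}` and `ε_k ≠ 0`. -/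
def memE (d j ν₀ : ℕ) (ε : MorreyIdx d j → ℂ) : Prop :=
  (∀ k, ε k = -1 ∨ ε k = 0 ∨ ε k = 1) ∧
  ∀ m : Fin d → Fin (2 ^ (j - ν₀)), ∃! k : MorreyIdx d j,
    memSubcube ν₀ (fun i => (m i : ℕ)) k ∧ ε k ≠ 0


/-!
The nonzero entries of `ε` have modulus one and sit one in each of the `2^{(j-ν₀)d}` cubes of
side `2^{ν₀}`, so by Hölder `|∑ ε_k λ_k| ≤ 2^{(j-ν₀)d(1-1/p₁)} ‖λ‖_{ℓ^{p₁}}`. Testing the Morrey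
norm on the whole cube `Q_{-j,0}` gives `2^{jd(1/u₁-1/p₁)} ‖λ‖_{ℓ^{p₁}} ≤ ‖λ | m_{u₁,p₁}‖`, and
minimality of `ν₀` gives `ν₀ d ≤ jd p₂/u₂ + d`; together these yield the bound with
`c = 2^{d/p₁}`.
-/

open Finset

theorem Real.sum_le_card_rpow_mul_sum_rpow {ι : Type*} (s : Finset ι) {f : ι → ℝ} {p : ℝ}
    (hp : 1 ≤ p) (hf : ∀ i ∈ s, 0 ≤ f i) :
    ∑ i ∈ s, f i ≤ (#s : ℝ) ^ (1 - 1 / p) * (∑ i ∈ s, f i ^ p) ^ (1 / p) := by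
  have hp₀ : 0 < p := by linarith
  have hsum : 0 ≤ ∑ i ∈ s, f i := sum_nonneg hf
  calc ∑ i ∈ s, f i = ((∑ i ∈ s, f i) ^ p) ^ (1 / p) := by
        rw [← Real.rpow_mul hsum, mul_one_div_cancel hp₀.ne', Real.rpow_one]
    _ ≤ ((#s : ℝ) ^ (p - 1) * ∑ i ∈ s, f i ^ p) ^ (1 / p) := by
        gcongr
        exact Real.rpow_sum_le_const_mul_sum_rpow_of_nonneg s hp hf
    _ = (#s : ℝ) ^ (1 - 1 / p) * (∑ i ∈ s, f i ^ p) ^ (1 / p) := by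
        rw [Real.mul_rpow (by positivity) (sum_nonneg fun i hi => by have := hf i hi; positivity),
          ← Real.rpow_mul (Nat.cast_nonneg _)]
        congr 2
        field_simp

open Classical in
theorem norm_sum_mul_le_sum_norm_of_norm_le_one {ι R : Type*} [Fintype ι] [SeminormedRing R]
    {ε : ι → R} (hε : ∀ k, ‖ε k‖ ≤ 1) (lam : ι → R) :
    ‖∑ k, ε k * lam k‖ ≤ ∑ k with ε k ≠ 0, ‖lam k‖ := by
  rw [← sum_filter_of_ne fun k _ hk => left_ne_zero_of_mul hk]
  refine (norm_sum_le _ _).trans (sum_le_sum fun k _ => ?_)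
  calc ‖ε k * lam k‖ ≤ ‖ε k‖ * ‖lam k‖ := norm_mul_le _ _
    _ ≤ ‖lam k‖ := mul_le_of_le_one_left (norm_nonneg _) (hε k)

/-- The dyadic cube of side `2 ^ ν` containing the unit cube `Q_{0,k}`. -/
def dyadicParent {d j : ℕ} (ν : ℕ) (k : MorreyIdx d j) : Fin d → Fin (2 ^ (j - ν)) :=
  fun i => ⟨k i / 2 ^ ν, Nat.div_lt_of_lt_mul <| (k i).isLt.trans_le <| by
    rw [← pow_add]; exact Nat.pow_le_pow_right two_pos (by omega)⟩

theorem memSubcube_iff_dyadicParent_eq {d j ν : ℕ} (m : Fin d → Fin (2 ^ (j - ν)))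
    (k : MorreyIdx d j) : memSubcube ν (fun i => (m i : ℕ)) k ↔ dyadicParent ν k = m := by
  simp [memSubcube, dyadicParent, funext_iff, Fin.ext_iff]

open Classical in
theorem card_support_of_memE {d j ν₀ : ℕ} {ε : MorreyIdx d j → ℂ} (hε : memE d j ν₀ ε) :
    #{k | ε k ≠ 0} = 2 ^ ((j - ν₀) * d) := by
  obtain ⟨-, hε⟩ := hε
  simp_rw [memSubcube_iff_dyadicParent_eq] at hε
  calc #{k | ε k ≠ 0} = Fintype.card (Fin d → Fin (2 ^ (j - ν₀))) := by
        refine card_bij (fun k _ => dyadicParent ν₀ k) (fun _ _ => mem_univ _) ?_ ?_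
        · intro a ha b hb hab
          simp only [mem_filter, mem_univ, true_and] at ha hb
          exact (hε _).unique ⟨rfl, ha⟩ ⟨hab.symm, hb⟩
        · intro m _
          obtain ⟨k, ⟨hkm, hk⟩, -⟩ := hε m
          exact ⟨k, by simpa using hk, hkm⟩
    _ = 2 ^ ((j - ν₀) * d) := by simp [pow_mul]

open Classical in
theorem norm_sum_mul_le_of_memE {d j ν₀ : ℕ} {ε : MorreyIdx d j → ℂ} (hε : memE d j ν₀ ε)
    {p : ℝ} (hp : 1 ≤ p) (lam : MorreyIdx d j → ℂ) :
    ‖∑ k, ε k * lam k‖ ≤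
      (2 : ℝ) ^ ((((j - ν₀) * d : ℕ) : ℝ) * (1 - 1 / p)) * (∑ k, ‖lam k‖ ^ p) ^ (1 / p) := by
  have hε_norm (k) : ‖ε k‖ ≤ 1 := by rcases hε.1 k with h | h | h <;> simp [h]
  calc ‖∑ k, ε k * lam k‖ ≤ ∑ k with ε k ≠ 0, ‖lam k‖ :=
        norm_sum_mul_le_sum_norm_of_norm_le_one hε_norm lam
    _ ≤ (#{k | ε k ≠ 0} : ℝ) ^ (1 - 1 / p) * (∑ k with ε k ≠ 0, ‖lam k‖ ^ p) ^ (1 / p) :=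
        Real.sum_le_card_rpow_mul_sum_rpow _ hp fun _ _ => norm_nonneg _
    _ ≤ (#{k | ε k ≠ 0} : ℝ) ^ (1 - 1 / p) * (∑ k, ‖lam k‖ ^ p) ^ (1 / p) := by
        gcongr
        exact subset_univ _
    _ = _ := by
        rw [card_support_of_memE hε, Nat.cast_pow, Nat.cast_ofNat, ← Real.rpow_natCast,
          ← Real.rpow_mul zero_le_two]

theorem le_morreyNorm {d j : ℕ} (u p : ℝ) (lam : MorreyIdx d j → ℂ) (ν : Fin (j + 1))
    (m : Fin d → Fin (2 ^ (j - (ν : ℕ)))) :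
    (2 : ℝ) ^ ((((ν : ℕ) * d : ℕ) : ℝ) * (1 / u - 1 / p)) *
      (∑ k : MorreyIdx d j,
        if memSubcube (ν : ℕ) (fun i => (m i : ℕ)) k then ‖lam k‖ ^ p else 0) ^ (1 / p) ≤
      morreyNorm d j u p lam := by
  unfold morreyNorm
  apply le_ciSup_of_le (Set.finite_range _).bddAbove ν
  apply le_ciSup (Set.finite_range _).bddAbove m

theorem rpow_mul_sum_rpow_le_morreyNorm (d j : ℕ) (u p : ℝ) (lam : MorreyIdx d j → ℂ) :
    (2 : ℝ) ^ (((j * d : ℕ) : ℝ) * (1 / u - 1 / p)) * (∑ k, ‖lam k‖ ^ p) ^ (1 / p) ≤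
      morreyNorm d j u p lam := by
  convert le_morreyNorm u p lam (Fin.last j) fun _ => ⟨0, by simp⟩ using 4 with k
  · simp
  exact (if_pos fun i => by simp [Nat.div_eq_of_lt (k i).isLt]).symm

theorem natCast_mul_le_add_of_isLeast {d ν₀ : ℕ} {t : ℝ} (ht : 0 ≤ t)
    (h : IsLeast {ν : ℕ | 1 ≤ ν ∧ (2 : ℝ) ^ (((ν * d : ℕ) : ℝ)) ≥ (2 : ℝ) ^ t} ν₀) :
    ((ν₀ * d : ℕ) : ℝ) ≤ t + d := by
  by_contra! hlt
  have hν₀ : 2 ≤ ν₀ := by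
    by_contra! h1
    obtain rfl : ν₀ = 1 := by have := h.1.1; omega
    push_cast at hlt
    linarith
  have hmem : ν₀ - 1 ∈ {ν : ℕ | 1 ≤ ν ∧ (2 : ℝ) ^ (((ν * d : ℕ) : ℝ)) ≥ (2 : ℝ) ^ t} := by
    refine ⟨by omega, Real.rpow_le_rpow_of_exponent_le one_le_two ?_⟩
    rw [Nat.sub_one_mul, Nat.cast_sub (Nat.le_mul_of_pos_left d (by omega))]
    push_cast at hlt ⊢
    linarith
  have := h.2 hmem
  omega

theorem stmt16_general (d : ℕ) (p₁ u₁ p₂ u₂ : ℝ)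
    (hp₂ : 1 ≤ p₂) (hp : p₂ < p₁) (hpu₂ : p₂ ≤ u₂) :
    ∃ c : ℝ, 0 < c ∧ ∀ j : ℕ, 1 ≤ j → ∀ ν₀ : ℕ,
      IsLeast {ν : ℕ | 1 ≤ ν ∧
        (2 : ℝ) ^ (((ν * d : ℕ) : ℝ)) ≥ (2 : ℝ) ^ (((j * d : ℕ) : ℝ) * p₂ / u₂)} ν₀ →
      ∀ ε : MorreyIdx d j → ℂ, memE d j ν₀ ε →
      ∀ lam : MorreyIdx d j → ℂ,
        ‖∑ k, ε k * lam k‖ ≤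
          c * (2 : ℝ) ^ (-(((ν₀ * d : ℕ) : ℝ))) *
            (2 : ℝ) ^ (((j * d : ℕ) : ℝ) * (1 - 1 / u₁ + p₂ / (u₂ * p₁))) *
            morreyNorm d j u₁ p₁ lam := by
  have hp₁ : 0 < p₁ := by linarith
  refine ⟨2 ^ ((d : ℝ) / p₁), by positivity, fun j hj ν₀ hν₀ ε hε lam => ?_⟩
  have hjd : ((j * d : ℕ) : ℝ) * p₂ / u₂ ≤ ((j * d : ℕ) : ℝ) := by
    rw [mul_div_assoc]
    exact mul_le_of_le_one_right (Nat.cast_nonneg _) ((div_le_one (by linarith)).2 hpu₂)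
  have hν₀j : ν₀ ≤ j := hν₀.2 ⟨hj, Real.rpow_le_rpow_of_exponent_le one_le_two hjd⟩
  have hu₂ : 0 < u₂ := by linarith
  have hν₀d := natCast_mul_le_add_of_isLeast (div_nonneg (by positivity) hu₂.le) hν₀
  set N := (∑ k, ‖lam k‖ ^ p₁) ^ (1 / p₁)
  set a := (((j - ν₀) * d : ℕ) : ℝ) * (1 - 1 / p₁)
  set b := ((j * d : ℕ) : ℝ) * (1 / u₁ - 1 / p₁)
  set e := (d : ℝ) / p₁ + -((ν₀ * d : ℕ) : ℝ) +
    ((j * d : ℕ) : ℝ) * (1 - 1 / u₁ + p₂ / (u₂ * p₁))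
  have hM := rpow_mul_sum_rpow_le_morreyNorm d j u₁ p₁ lam
  have hexp : a - b ≤ e := by
    have hgap : e - (a - b) =
        ((d : ℝ) + ((j * d : ℕ) : ℝ) * p₂ / u₂ - ((ν₀ * d : ℕ) : ℝ)) / p₁ := by
      simp only [a, b, e, Nat.cast_mul, Nat.cast_sub hν₀j]
      field_simp
      ring
    rw [← sub_nonneg, hgap]
    exact div_nonneg (by linarith) hp₁.le
  calc ‖∑ k, ε k * lam k‖ ≤ 2 ^ a * N := norm_sum_mul_le_of_memE hε (by linarith) lam
    _ = 2 ^ (a - b) * (2 ^ b * N) := by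
        rw [← mul_assoc, ← Real.rpow_add two_pos, sub_add_cancel]
    _ ≤ 2 ^ (a - b) * morreyNorm d j u₁ p₁ lam := by gcongr
    _ ≤ 2 ^ e * morreyNorm d j u₁ p₁ lam := by
        gcongr
        · exact (by positivity : (0 : ℝ) ≤ 2 ^ b * N).trans hM
        · exact one_le_two
    _ = _ := by rw [Real.rpow_add two_pos, Real.rpow_add two_pos]

/-- for `1 ≤ p₂ < p₁ ≤ u₁ < ∞`, `p₂ ≤ u₂ < ∞` with `p₁/u₁ > p₂/u₂`,
there is `c > 0` independent of `j` such that for all `j ≥ 1`, with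
`ν₀ = min{ν ∈ ℕ : 2^{νd} ≥ 2^{jd p₂/u₂}}`, every `ε ∈ ℰ` and every `λ ∈ ℂ^{𝒦_j}`
satisfy `|∑_k ε_k λ_k| ≤ c 2^{-ν₀ d} 2^{jd(1 - 1/u₁ + p₂/(u₂ p₁))} ‖λ | m^{2^{jd}}_{u₁,p₁}‖`. -/
theorem stmt16 (d : ℕ) (hd : 0 < d) (p₁ u₁ p₂ u₂ : ℝ)
    (hp₂ : 1 ≤ p₂) (hp : p₂ < p₁) (hpu₁ : p₁ ≤ u₁) (hpu₂ : p₂ ≤ u₂)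
    (hratio : p₂ / u₂ < p₁ / u₁) :
    ∃ c : ℝ, 0 < c ∧ ∀ j : ℕ, 1 ≤ j → ∀ ν₀ : ℕ,
      IsLeast {ν : ℕ | 1 ≤ ν ∧
        (2 : ℝ) ^ (((ν * d : ℕ) : ℝ)) ≥ (2 : ℝ) ^ (((j * d : ℕ) : ℝ) * p₂ / u₂)} ν₀ →
      ∀ ε : MorreyIdx d j → ℂ, memE d j ν₀ ε →
      ∀ lam : MorreyIdx d j → ℂ,
        ‖∑ k, ε k * lam k‖ ≤
          c * (2 : ℝ) ^ (-(((ν₀ * d : ℕ) : ℝ))) *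
            (2 : ℝ) ^ (((j * d : ℕ) : ℝ) * (1 - 1 / u₁ + p₂ / (u₂ * p₁))) *
            morreyNorm d j u₁ p₁ lam :=
  stmt16_general d p₁ u₁ p₂ u₂ hp₂ hp hpu₂
end
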